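/- arXiv:2110.13799 — 4 statements merged into one kernel-verified Lean document; each statement's English description precedes it below -/
import Mathlib

section
/- Let S and 𝒜 be finite nonempty sets, P a transition kernel, r a reward function, γ ∈ (0,1), and let π₁, π₂ be policies with value functions V₁, V₂ (i.e., V₁ and V₂ satisfy the Bellman equations for π₁ and π₂ respectively). Let A₂(s,a) = r(s,a) + γ ∑_{s'} P(s'|s,a) V₂(s') − V₂(s) be the advantage of π₂. If (π₁(a|s) − π₂(a|s))·A₂(s,a) ≥ 0 for all (s,a) ∈ S × 𝒜, then V₁(s) ≥ V₂(s) for all s ∈ S. (Lemma 1 of the paper.) -/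
/-!
Put `f = V₂ - V₁`. Expanding `V₁` by its Bellman equation gives the performance-difference
identity `f s = γ · 𝔼_{a ∼ π₁(s), s' ∼ P(s,a)} f s' - 𝔼_{a ∼ π₁(s)} A₂(s,a)`. The advantage of
`π₂` averages to zero under `π₂`, so the sign condition makes its `π₁`-average nonnegative, whence
`f s ≤ γ · 𝔼 f`. At a state where `f` is maximal this reads `max f ≤ γ · max f`, so `max f ≤ 0`.
-/

open Finset

lemma sum_mul_le_of_le {ι : Type*} [Fintype ι] {w g : ι → ℝ} {M : ℝ}
    (hw : ∀ i, 0 ≤ w i) (hw1 : ∑ i, w i = 1) (hg : ∀ i, g i ≤ M) :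
    ∑ i, w i * g i ≤ M :=
  calc ∑ i, w i * g i ≤ ∑ i, w i * M :=
        sum_le_sum fun i _ => mul_le_mul_of_nonneg_left (hg i) (hw i)
    _ = M := by rw [← sum_mul, hw1, one_mul]

section MDP

variable {S 𝒜 : Type*} [Fintype S] [Fintype 𝒜]

lemma le_zero_of_le_discount_mul_mean {P : S → 𝒜 → S → ℝ} {π : S → 𝒜 → ℝ} {γ : ℝ}
    (hPnn : ∀ s a s', 0 ≤ P s a s') (hPsum : ∀ s a, ∑ s', P s a s' = 1)
    (hπnn : ∀ s a, 0 ≤ π s a) (hπsum : ∀ s, ∑ a, π s a = 1)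
    (hγ0 : 0 ≤ γ) (hγ1 : γ < 1) {f : S → ℝ}
    (hf : ∀ s, f s ≤ γ * ∑ a, π s a * ∑ s', P s a s' * f s') (s : S) :
    f s ≤ 0 := by
  have : Nonempty S := ⟨s⟩
  obtain ⟨s₀, hs₀⟩ := Finite.exists_max f
  have hmean : ∑ a, π s₀ a * ∑ s', P s₀ a s' * f s' ≤ f s₀ :=
    sum_mul_le_of_le (hπnn s₀) (hπsum s₀) fun a => sum_mul_le_of_le (hPnn s₀ a) (hPsum s₀ a) hs₀
  have hmax : f s₀ ≤ γ * f s₀ := (hf s₀).trans (mul_le_mul_of_nonneg_left hmean hγ0)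
  have hmax_nonpos : f s₀ ≤ 0 := by nlinarith
  exact (hs₀ s).trans hmax_nonpos

variable (P : S → 𝒜 → S → ℝ) (r : S → 𝒜 → ℝ) (γ : ℝ)

/-- The Q-function of `V`. -/
def lookahead (V : S → ℝ) (s : S) (a : 𝒜) : ℝ :=
  r s a + γ * ∑ s', P s a s' * V s'

def advantage (V : S → ℝ) (s : S) (a : 𝒜) : ℝ :=
  lookahead P r γ V s a - V s

variable {P r γ}

lemma sum_mul_advantage_eq_zero {π : S → 𝒜 → ℝ} {V : S → ℝ} {s : S}
    (hπsum : ∑ a, π s a = 1) (hV : V s = ∑ a, π s a * lookahead P r γ V s a) :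
    ∑ a, π s a * advantage P r γ V s a = 0 := by
  simp only [advantage, mul_sub, sum_sub_distrib, ← sum_mul, hπsum, ← hV, one_mul, sub_self]

lemma sum_mul_advantage_nonneg {π₁ π₂ : S → 𝒜 → ℝ} {V : S → ℝ} {s : S}
    (hπ₂sum : ∑ a, π₂ s a = 1) (hV : V s = ∑ a, π₂ s a * lookahead P r γ V s a)
    (h : ∀ a, 0 ≤ (π₁ s a - π₂ s a) * advantage P r γ V s a) :
    0 ≤ ∑ a, π₁ s a * advantage P r γ V s a := by
  have hsplit : ∑ a, π₁ s a * advantage P r γ V s a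
      = ∑ a, (π₁ s a - π₂ s a) * advantage P r γ V s a
        + ∑ a, π₂ s a * advantage P r γ V s a := by
    rw [← sum_add_distrib]
    exact sum_congr rfl fun a _ => by ring
  rw [hsplit, sum_mul_advantage_eq_zero hπ₂sum hV, add_zero]
  exact sum_nonneg fun a _ => h a

lemma sub_eq_discount_mul_mean_sub_sum_mul_advantage {π₁ : S → 𝒜 → ℝ} {V₁ V₂ : S → ℝ} {s : S}
    (hπ₁sum : ∑ a, π₁ s a = 1) (hV₁ : V₁ s = ∑ a, π₁ s a * lookahead P r γ V₁ s a) :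
    V₂ s - V₁ s = γ * ∑ a, π₁ s a * ∑ s', P s a s' * (V₂ s' - V₁ s')
      - ∑ a, π₁ s a * advantage P r γ V₂ s a := by
  simp only [hV₁, advantage, lookahead, mul_sub, mul_add, sum_sub_distrib, sum_add_distrib,
    mul_sum, ← sum_mul, hπ₁sum, one_mul, mul_left_comm γ]
  ring

end MDP

theorem statewise_policy_improvement_general
    {S 𝒜 : Type*} [Fintype S] [Fintype 𝒜]
    (P : S → 𝒜 → S → ℝ) (r : S → 𝒜 → ℝ) (γ : ℝ)
    (hγ0 : 0 < γ) (hγ1 : γ < 1)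
    (hPnn : ∀ s a s', 0 ≤ P s a s') (hPsum : ∀ s a, ∑ s', P s a s' = 1)
    (π₁ π₂ : S → 𝒜 → ℝ)
    (hπ₁nn : ∀ s a, 0 ≤ π₁ s a) (hπ₁sum : ∀ s, ∑ a, π₁ s a = 1)
    (hπ₂sum : ∀ s, ∑ a, π₂ s a = 1)
    (V₁ V₂ : S → ℝ)
    (hV₁ : ∀ s, V₁ s = ∑ a, π₁ s a * (r s a + γ * ∑ s', P s a s' * V₁ s'))
    (hV₂ : ∀ s, V₂ s = ∑ a, π₂ s a * (r s a + γ * ∑ s', P s a s' * V₂ s'))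
    (A₂ : S → 𝒜 → ℝ)
    (hA₂ : ∀ s a, A₂ s a = r s a + γ * ∑ s', P s a s' * V₂ s' - V₂ s)
    (h : ∀ s a, 0 ≤ (π₁ s a - π₂ s a) * A₂ s a) :
    ∀ s, V₂ s ≤ V₁ s := by
  obtain rfl : A₂ = advantage P r γ V₂ := funext₂ hA₂
  have hdiff : ∀ s, V₂ s - V₁ s ≤ γ * ∑ a, π₁ s a * ∑ s', P s a s' * (V₂ s' - V₁ s') := by
    intro s
    rw [sub_eq_discount_mul_mean_sub_sum_mul_advantage (hπ₁sum s) (hV₁ s)]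
    linarith [sum_mul_advantage_nonneg (hπ₂sum s) (hV₂ s) (h s)]
  exact fun s => sub_nonpos.mp
    (le_zero_of_le_discount_mul_mean hPnn hPsum hπ₁nn hπ₁sum hγ0.le hγ1 hdiff s)

/-- Lemma 1: state-wise policy improvement from the sign condition
`(π₁(a|s) − π₂(a|s)) · A^{π₂}(s,a) ≥ 0`. -/
theorem statewise_policy_improvement
    {S 𝒜 : Type*} [Fintype S] [Fintype 𝒜] [Nonempty S] [Nonempty 𝒜]
    (P : S → 𝒜 → S → ℝ) (r : S → 𝒜 → ℝ) (γ : ℝ)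
    (hγ0 : 0 < γ) (hγ1 : γ < 1)
    (hPnn : ∀ s a s', 0 ≤ P s a s') (hPsum : ∀ s a, ∑ s', P s a s' = 1)
    (π₁ π₂ : S → 𝒜 → ℝ)
    (hπ₁nn : ∀ s a, 0 ≤ π₁ s a) (hπ₁sum : ∀ s, ∑ a, π₁ s a = 1)
    (hπ₂nn : ∀ s a, 0 ≤ π₂ s a) (hπ₂sum : ∀ s, ∑ a, π₂ s a = 1)
    (V₁ V₂ : S → ℝ)
    (hV₁ : ∀ s, V₁ s = ∑ a, π₁ s a * (r s a + γ * ∑ s', P s a s' * V₁ s'))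
    (hV₂ : ∀ s, V₂ s = ∑ a, π₂ s a * (r s a + γ * ∑ s', P s a s' * V₂ s'))
    (A₂ : S → 𝒜 → ℝ)
    (hA₂ : ∀ s a, A₂ s a = r s a + γ * ∑ s', P s a s' * V₂ s' - V₂ s)
    (h : ∀ s a, 0 ≤ (π₁ s a - π₂ s a) * A₂ s a) :
    ∀ s, V₂ s ≤ V₁ s :=
  statewise_policy_improvement_general P r γ hγ0 hγ1 hPnn hPsum π₁ π₂ hπ₁nn hπ₁sum hπ₂sum V₁ V₂ hV₁
    hV₂ A₂ hA₂ h
end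

section
/- Under the hypotheses of the state-wise policy improvement lemma (finite MDP; value functions V₁, V₂ of policies π₁, π₂ satisfying their Bellman equations; A₂ the advantage of π₂; and ∑_a π₁(a|s) A₂(s,a) ≥ 0 for every state s), if additionally there is a state s₀ with ∑_a π₁(a|s₀) A₂(s₀,a) > 0, then V₁(s₀) > V₂(s₀). (Strict policy improvement, proved as part of Lemma B.1 on strict improvement under PPO-Clip.) -/
/-!
With `K` the transition matrix of `π₁` and `g s = ∑ₐ π₁(a|s) A₂(s,a)`, the difference
`W = V₁ - V₂` solves the Bellman-type equation `W = g + γ K W`. Since `K` is row-stochastic,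
`K W` is an average of values of `W`, so at a minimiser `m` of `W` we get
`W m ≥ g m + γ W m ≥ γ W m`, whence `W ≥ 0` as `γ < 1`. Then `K W ≥ 0`, so `W ≥ g`, and
in particular `W s₀ ≥ g s₀ > 0`.
-/

open Finset Matrix

namespace Matrix

variable {n : Type*} [Fintype n] [DecidableEq n] {M : Matrix n n ℝ}

lemma le_mulVec_of_mem_rowStochastic (hM : M ∈ rowStochastic ℝ n) {v : n → ℝ} {c : ℝ}
    (hc : ∀ j, c ≤ v j) (i : n) : c ≤ (M *ᵥ v) i :=
  calc c = ∑ j, M i j * c := by rw [← sum_mul, sum_row_of_mem_rowStochastic hM, one_mul]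
    _ ≤ ∑ j, M i j * v j :=
      sum_le_sum fun j _ => mul_le_mul_of_nonneg_left (hc j) (nonneg_of_mem_rowStochastic hM)

variable {γ : ℝ} {g w : n → ℝ}

lemma nonneg_of_eq_add_smul_mulVec (hM : M ∈ rowStochastic ℝ n) (hγ0 : 0 ≤ γ) (hγ1 : γ < 1)
    (hg : 0 ≤ g) (hw : w = g + γ • M *ᵥ w) : 0 ≤ w := by
  intro i
  obtain ⟨m, -, hm⟩ := exists_min_image univ w ⟨i, mem_univ i⟩
  have hmin : ∀ j, w m ≤ w j := fun j => hm j (mem_univ j)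
  have hwm : w m = g m + γ * (M *ᵥ w) m := congrFun hw m
  have hγwm : γ * w m ≤ w m :=
    calc γ * w m ≤ γ * (M *ᵥ w) m :=
          mul_le_mul_of_nonneg_left (le_mulVec_of_mem_rowStochastic hM hmin m) hγ0
      _ ≤ w m := by rw [hwm]; exact le_add_of_nonneg_left (hg m)
  have : 0 ≤ w m := by nlinarith
  exact this.trans (hmin i)

lemma le_of_eq_add_smul_mulVec (hM : M ∈ rowStochastic ℝ n) (hγ0 : 0 ≤ γ) (hγ1 : γ < 1)
    (hg : 0 ≤ g) (hw : w = g + γ • M *ᵥ w) : g ≤ w := by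
  have hMw : 0 ≤ M *ᵥ w :=
    nonneg_mulVec_of_mem_rowStochastic hM (nonneg_of_eq_add_smul_mulVec hM hγ0 hγ1 hg hw)
  intro i
  rw [hw]
  exact le_add_of_nonneg_right (mul_nonneg hγ0 (hMw i))

end Matrix

section MDP

variable {S 𝒜 : Type*} [Fintype S] [Fintype 𝒜]

def policyTransition (P : S → 𝒜 → S → ℝ) (π : S → 𝒜 → ℝ) : Matrix S S ℝ :=
  fun s s' => ∑ a, π s a * P s a s'

lemma policyTransition_mem_rowStochastic [DecidableEq S] {P : S → 𝒜 → S → ℝ}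
    {π : S → 𝒜 → ℝ} (hPnn : ∀ s a s', 0 ≤ P s a s') (hPsum : ∀ s a, ∑ s', P s a s' = 1)
    (hπnn : ∀ s a, 0 ≤ π s a) (hπsum : ∀ s, ∑ a, π s a = 1) :
    policyTransition P π ∈ rowStochastic ℝ S := by
  refine mem_rowStochastic_iff_sum.2 ⟨fun s s' => ?_, fun s => ?_⟩
  · exact sum_nonneg fun a _ => mul_nonneg (hπnn s a) (hPnn s a s')
  · simp only [policyTransition]
    rw [sum_comm]
    simp only [← mul_sum, hPsum, mul_one, hπsum]

lemma sub_eq_advantage_add_smul_mulVec {P : S → 𝒜 → S → ℝ} {r : S → 𝒜 → ℝ} {γ : ℝ}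
    {π : S → 𝒜 → ℝ} {V V' : S → ℝ} {A : S → 𝒜 → ℝ} (hπsum : ∀ s, ∑ a, π s a = 1)
    (hV : ∀ s, V s = ∑ a, π s a * (r s a + γ * ∑ s', P s a s' * V s'))
    (hA : ∀ s a, A s a = r s a + γ * ∑ s', P s a s' * V' s' - V' s) :
    V - V' = (fun s => ∑ a, π s a * A s a) + γ • policyTransition P π *ᵥ (V - V') := by
  funext s
  have hKW : (policyTransition P π *ᵥ (V - V')) s
      = ∑ a, π s a * ∑ s', P s a s' * (V - V') s' := by
    simp only [mulVec, dotProduct, policyTransition, sum_mul, mul_sum, mul_assoc]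
    exact sum_comm
  calc V s - V' s = ∑ a, π s a * (r s a + γ * ∑ s', P s a s' * V s' - V' s) := by
        simp only [mul_sub, sum_sub_distrib, ← sum_mul, hπsum, one_mul, ← hV]
    _ = ∑ a, π s a * (A s a + γ * ∑ s', P s a s' * (V - V') s') :=
        sum_congr rfl fun a _ => by simp only [hA, Pi.sub_apply, mul_sub, sum_sub_distrib]; ring
    _ = _ := by
        simp only [mul_add, sum_add_distrib, hKW, mul_sum, Pi.add_apply, Pi.smul_apply,
          smul_eq_mul]
        exact congrArg _ (sum_congr rfl fun a _ => sum_congr rfl fun s' _ => by ring)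

end MDP

theorem strict_policy_improvement_general
    {S 𝒜 : Type*} [Fintype S] [Fintype 𝒜]
    (P : S → 𝒜 → S → ℝ) (r : S → 𝒜 → ℝ) (γ : ℝ)
    (hγ0 : 0 < γ) (hγ1 : γ < 1)
    (hPnn : ∀ s a s', 0 ≤ P s a s') (hPsum : ∀ s a, ∑ s', P s a s' = 1)
    (π₁ : S → 𝒜 → ℝ)
    (hπ₁nn : ∀ s a, 0 ≤ π₁ s a) (hπ₁sum : ∀ s, ∑ a, π₁ s a = 1)
    (V₁ V₂ : S → ℝ)
    (hV₁ : ∀ s, V₁ s = ∑ a, π₁ s a * (r s a + γ * ∑ s', P s a s' * V₁ s'))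
    (A₂ : S → 𝒜 → ℝ)
    (hA₂ : ∀ s a, A₂ s a = r s a + γ * ∑ s', P s a s' * V₂ s' - V₂ s)
    (h : ∀ s, 0 ≤ ∑ a, π₁ s a * A₂ s a)
    (s₀ : S) (hs₀ : 0 < ∑ a, π₁ s₀ a * A₂ s₀ a) :
    V₂ s₀ < V₁ s₀ := by
  classical
  have hK := policyTransition_mem_rowStochastic hPnn hPsum hπ₁nn hπ₁sum
  have hW := sub_eq_advantage_add_smul_mulVec hπ₁sum hV₁ hA₂
  have hle : _ ≤ V₁ s₀ - V₂ s₀ := le_of_eq_add_smul_mulVec hK hγ0.le hγ1 h hW s₀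
  linarith

/-- Strict policy improvement: under the hypotheses of the state-wise policy
improvement lemma, if moreover `∑_a π₁(a|s₀) A^{π₂}(s₀,a) > 0` at some state `s₀`,
then `V^{π₁}(s₀) > V^{π₂}(s₀)`. -/
theorem strict_policy_improvement
    {S 𝒜 : Type*} [Fintype S] [Fintype 𝒜] [Nonempty S] [Nonempty 𝒜]
    (P : S → 𝒜 → S → ℝ) (r : S → 𝒜 → ℝ) (γ : ℝ)
    (hγ0 : 0 < γ) (hγ1 : γ < 1)
    (hPnn : ∀ s a s', 0 ≤ P s a s') (hPsum : ∀ s a, ∑ s', P s a s' = 1)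
    (π₁ π₂ : S → 𝒜 → ℝ)
    (hπ₁nn : ∀ s a, 0 ≤ π₁ s a) (hπ₁sum : ∀ s, ∑ a, π₁ s a = 1)
    (hπ₂nn : ∀ s a, 0 ≤ π₂ s a) (hπ₂sum : ∀ s, ∑ a, π₂ s a = 1)
    (V₁ V₂ : S → ℝ)
    (hV₁ : ∀ s, V₁ s = ∑ a, π₁ s a * (r s a + γ * ∑ s', P s a s' * V₁ s'))
    (hV₂ : ∀ s, V₂ s = ∑ a, π₂ s a * (r s a + γ * ∑ s', P s a s' * V₂ s'))
    (A₂ : S → 𝒜 → ℝ)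
    (hA₂ : ∀ s a, A₂ s a = r s a + γ * ∑ s', P s a s' * V₂ s' - V₂ s)
    (h : ∀ s, 0 ≤ ∑ a, π₁ s a * A₂ s a)
    (s₀ : S) (hs₀ : 0 < ∑ a, π₁ s₀ a * A₂ s₀ a) :
    V₂ s₀ < V₁ s₀ :=
  strict_policy_improvement_general P r γ hγ0 hγ1 hPnn hPsum π₁ hπ₁nn hπ₁sum V₁ V₂ hV₁ A₂ hA₂ h s₀
    hs₀
end

section
/- Let S and 𝒜 be finite nonempty sets with transition kernel P, reward r, discount γ ∈ (0,1). Let π be a strictly positive policy with value function V satisfying its Bellman equation, and let A(s,a) = r(s,a) + γ ∑_{s'} P(s'|s,a) V(s') − V(s) be its advantage. Let c : S × 𝒜 → ℝ be strictly positive with c(s,a) ≥ 1 whenever A(s,a) > 0 and c(s,a) ≤ 1 whenever A(s,a) < 0, and define the policy π'(a|s) = c(s,a) π(a|s) / ∑_{b} c(s,b) π(b|s). If V' is the value function of π' (satisfying its Bellman equation), then V'(s) ≥ V(s) for all s ∈ S. (Policy improvement of the EMDA-reweighted policy, part of Lemma B.1.) -/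
/-! The one-step performance-difference identity
`V' s - V s = 𝔼_{π'(·|s)} A(s, ·) + γ 𝔼_{π'(·|s)} 𝔼_{P(·|s,a)} (V' - V)`
reduces the claim to `𝔼_{π'(·|s)} A(s, ·) ≥ 0`. Reweighting by `c` only moves mass towards
positive-advantage actions, so `∑ c π A ≥ ∑ π A = 0`. Hence `D = V' - V` satisfies
`γ K D ≤ D` for the stochastic kernel `K` of `π'`, and at a minimiser of `D` this forces
`(1 - γ) min D ≥ 0`. -/

open Finset

lemma le_mul_of_sign_condition {c x : ℝ} (hup : 0 < x → 1 ≤ c) (hdown : x < 0 → c ≤ 1) :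
    x ≤ c * x := by
  rcases lt_trichotomy x 0 with hx | hx | hx
  · nlinarith [hdown hx]
  · simp [hx]
  · nlinarith [hup hx]

section Reweighting

variable {ι : Type*} [Fintype ι] {p c q x : ι → ℝ}

lemma sum_mul_pos_of_sum_eq_one (hc : ∀ i, 0 < c i) (hp : ∀ i, 0 < p i)
    (hsum : ∑ i, p i = 1) : 0 < ∑ i, c i * p i :=
  sum_pos (fun i _ => mul_pos (hc i) (hp i)) (nonempty_of_sum_ne_zero (hsum ▸ one_ne_zero))

variable (hq : ∀ i, q i = c i * p i / ∑ j, c j * p j)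
include hq

lemma reweight_nonneg (hc : ∀ i, 0 ≤ c i) (hp : ∀ i, 0 ≤ p i) (i : ι) : 0 ≤ q i := by
  rw [hq]
  exact div_nonneg (mul_nonneg (hc i) (hp i)) (sum_nonneg fun j _ => mul_nonneg (hc j) (hp j))

lemma sum_reweight_eq_one (hZ : 0 < ∑ i, c i * p i) : ∑ i, q i = 1 := by
  simp_rw [hq]
  rw [← sum_div, div_self hZ.ne']

lemma sum_reweight_mul_nonneg (hc : ∀ i, 0 ≤ c i) (hp : ∀ i, 0 ≤ p i)
    (hup : ∀ i, 0 < x i → 1 ≤ c i) (hdown : ∀ i, x i < 0 → c i ≤ 1)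
    (h0 : 0 ≤ ∑ i, p i * x i) : 0 ≤ ∑ i, q i * x i := by
  have hle : ∑ i, p i * x i ≤ ∑ i, c i * p i * x i := sum_le_sum fun i _ => by
    have := mul_le_mul_of_nonneg_left (le_mul_of_sign_condition (hup i) (hdown i)) (hp i)
    linarith
  simp_rw [hq, div_mul_eq_mul_div]
  rw [← sum_div]
  exact div_nonneg (h0.trans hle) (sum_nonneg fun j _ => mul_nonneg (hc j) (hp j))

end Reweighting

lemma nonneg_of_discount_mul_average_le {S : Type*} [Fintype S] {K : S → S → ℝ}
    (hK0 : ∀ s s', 0 ≤ K s s') (hK1 : ∀ s, ∑ s', K s s' = 1) {γ : ℝ} (hγ0 : 0 ≤ γ)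
    (hγ1 : γ < 1) {D : S → ℝ} (hD : ∀ s, γ * ∑ s', K s s' * D s' ≤ D s) (s : S) :
    0 ≤ D s := by
  have : Nonempty S := ⟨s⟩
  obtain ⟨s₀, hs₀⟩ := Finite.exists_min D
  have havg : D s₀ ≤ ∑ s', K s₀ s' * D s' :=
    calc D s₀ = ∑ s', K s₀ s' * D s₀ := by rw [← sum_mul, hK1, one_mul]
      _ ≤ ∑ s', K s₀ s' * D s' :=
        sum_le_sum fun s' _ => mul_le_mul_of_nonneg_left (hs₀ s') (hK0 s₀ s')
  have hmin : γ * D s₀ ≤ D s₀ := (mul_le_mul_of_nonneg_left havg hγ0).trans (hD s₀)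
  have : 0 ≤ D s₀ := by nlinarith
  exact this.trans (hs₀ s)

section MDP

variable {S 𝒜 : Type*} [Fintype S] [Fintype 𝒜] {P : S → 𝒜 → S → ℝ} {r : S → 𝒜 → ℝ} {γ : ℝ}

lemma sum_mul_sum_mul_comm (π : 𝒜 → ℝ) (Q : 𝒜 → S → ℝ) (D : S → ℝ) :
    ∑ a, π a * ∑ s', Q a s' * D s' = ∑ s', (∑ a, π a * Q a s') * D s' := by
  simp_rw [mul_sum, sum_mul, mul_assoc]
  exact sum_comm

lemma sum_policy_mul_transition_eq_one {π : S → 𝒜 → ℝ} (hπsum : ∀ s, ∑ a, π s a = 1)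
    (hPsum : ∀ s a, ∑ s', P s a s' = 1) (s : S) : ∑ s', ∑ a, π s a * P s a s' = 1 := by
  rw [sum_comm]
  simp_rw [← mul_sum, hPsum, mul_one, hπsum]

lemma sum_policy_mul_advantage_eq_zero {π : S → 𝒜 → ℝ} {V : S → ℝ} {A : S → 𝒜 → ℝ}
    (hπsum : ∀ s, ∑ a, π s a = 1)
    (hV : ∀ s, V s = ∑ a, π s a * (r s a + γ * ∑ s', P s a s' * V s'))
    (hA : ∀ s a, A s a = r s a + γ * ∑ s', P s a s' * V s' - V s) (s : S) :
    ∑ a, π s a * A s a = 0 := by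
  simp_rw [hA, mul_sub]
  rw [sum_sub_distrib, ← hV, ← sum_mul, hπsum, one_mul, sub_self]

lemma value_sub_value_eq {π' : S → 𝒜 → ℝ} {V V' : S → ℝ} {A : S → 𝒜 → ℝ}
    (hπ'sum : ∀ s, ∑ a, π' s a = 1)
    (hV' : ∀ s, V' s = ∑ a, π' s a * (r s a + γ * ∑ s', P s a s' * V' s'))
    (hA : ∀ s a, A s a = r s a + γ * ∑ s', P s a s' * V s' - V s) (s : S) :
    V' s - V s = ∑ a, π' s a * A s a + γ * ∑ a, π' s a * ∑ s', P s a s' * (V' s' - V s') := by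
  have hV_avg : V s = ∑ a, π' s a * V s := by rw [← sum_mul, hπ'sum, one_mul]
  rw [hV' s, hV_avg, ← sum_sub_distrib, mul_sum, ← sum_add_distrib]
  refine sum_congr rfl fun a _ => ?_
  simp_rw [hA, mul_sub, sum_sub_distrib]
  ring

end MDP

theorem emda_reweighted_policy_improvement_general
    {S 𝒜 : Type*} [Fintype S] [Fintype 𝒜]
    (P : S → 𝒜 → S → ℝ) (r : S → 𝒜 → ℝ) (γ : ℝ)
    (hγ0 : 0 < γ) (hγ1 : γ < 1)
    (hPnn : ∀ s a s', 0 ≤ P s a s') (hPsum : ∀ s a, ∑ s', P s a s' = 1)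
    (π : S → 𝒜 → ℝ)
    (hπpos : ∀ s a, 0 < π s a) (hπsum : ∀ s, ∑ a, π s a = 1)
    (V : S → ℝ)
    (hV : ∀ s, V s = ∑ a, π s a * (r s a + γ * ∑ s', P s a s' * V s'))
    (A : S → 𝒜 → ℝ)
    (hA : ∀ s a, A s a = r s a + γ * ∑ s', P s a s' * V s' - V s)
    (c : S → 𝒜 → ℝ)
    (hcpos : ∀ s a, 0 < c s a)
    (hcup : ∀ s a, 0 < A s a → 1 ≤ c s a)
    (hcdown : ∀ s a, A s a < 0 → c s a ≤ 1)
    (π' : S → 𝒜 → ℝ)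
    (hπ' : ∀ s a, π' s a = c s a * π s a / ∑ b, c s b * π s b)
    (V' : S → ℝ)
    (hV' : ∀ s, V' s = ∑ a, π' s a * (r s a + γ * ∑ s', P s a s' * V' s')) :
    ∀ s, V s ≤ V' s := by
  have hc s a : 0 ≤ c s a := (hcpos s a).le
  have hπ s a : 0 ≤ π s a := (hπpos s a).le
  have hπ'nn s a : 0 ≤ π' s a := reweight_nonneg (hπ' s) (hc s) (hπ s) a
  have hπ'sum s : ∑ a, π' s a = 1 :=
    sum_reweight_eq_one (hπ' s) (sum_mul_pos_of_sum_eq_one (hcpos s) (hπpos s) (hπsum s))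
  have hadv s : 0 ≤ ∑ a, π' s a * A s a :=
    sum_reweight_mul_nonneg (hπ' s) (hc s) (hπ s) (hcup s) (hcdown s)
      (sum_policy_mul_advantage_eq_zero hπsum hV hA s).ge
  have hstep s : γ * ∑ s', (∑ a, π' s a * P s a s') * (V' s' - V s') ≤ V' s - V s := by
    rw [← sum_mul_sum_mul_comm, value_sub_value_eq hπ'sum hV' hA s]
    linarith [hadv s]
  intro s
  exact sub_nonneg.1 <| nonneg_of_discount_mul_average_le
    (fun s s' => sum_nonneg fun a _ => mul_nonneg (hπ'nn s a) (hPnn s a s'))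
    (sum_policy_mul_transition_eq_one hπ'sum hPsum) hγ0.le hγ1 hstep s

/-- Policy improvement of the EMDA-reweighted policy (part of Lemma B.1): if the
strictly positive policy `π` with value `V` is reweighted by multipliers `c` that are
`≥ 1` on positive-advantage actions and `≤ 1` on negative-advantage actions (and then
renormalized), the value function `V'` of the new policy `π'` satisfies `V' ≥ V`. -/
theorem emda_reweighted_policy_improvement
    {S 𝒜 : Type*} [Fintype S] [Fintype 𝒜] [Nonempty S] [Nonempty 𝒜]
    (P : S → 𝒜 → S → ℝ) (r : S → 𝒜 → ℝ) (γ : ℝ)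
    (hγ0 : 0 < γ) (hγ1 : γ < 1)
    (hPnn : ∀ s a s', 0 ≤ P s a s') (hPsum : ∀ s a, ∑ s', P s a s' = 1)
    (π : S → 𝒜 → ℝ)
    (hπpos : ∀ s a, 0 < π s a) (hπsum : ∀ s, ∑ a, π s a = 1)
    (V : S → ℝ)
    (hV : ∀ s, V s = ∑ a, π s a * (r s a + γ * ∑ s', P s a s' * V s'))
    (A : S → 𝒜 → ℝ)
    (hA : ∀ s a, A s a = r s a + γ * ∑ s', P s a s' * V s' - V s)
    (c : S → 𝒜 → ℝ)
    (hcpos : ∀ s a, 0 < c s a)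
    (hcup : ∀ s a, 0 < A s a → 1 ≤ c s a)
    (hcdown : ∀ s a, A s a < 0 → c s a ≤ 1)
    (π' : S → 𝒜 → ℝ)
    (hπ' : ∀ s a, π' s a = c s a * π s a / ∑ b, c s b * π s b)
    (V' : S → ℝ)
    (hV' : ∀ s, V' s = ∑ a, π' s a * (r s a + γ * ∑ s', P s a s' * V' s')) :
    ∀ s, V s ≤ V' s :=
  emda_reweighted_policy_improvement_general P r γ hγ0 hγ1 hPnn hPsum π hπpos hπsum V hV A hA c
    hcpos hcup hcdown π' hπ' V' hV'
end

section
/- Let S and 𝒜 be finite nonempty sets, P a transition kernel, r a reward, γ ∈ (0,1), and let π*, π be policies with value functions V*, V satisfying their Bellman equations. Let A^π(s,a) = r(s,a) + γ ∑_{s'} P(s'|s,a) V(s') − V(s). Let μ : S → ℝ be an initial distribution (μ(s) ≥ 0, ∑_s μ(s) = 1) and let ν* : S → ℝ satisfy the discounted visitation flow equation ν*(s') = (1 − γ) μ(s') + γ ∑_{s,a} ν*(s) π*(a|s) P(s'|s,a) for all s' ∈ S. Then ∑_{s} μ(s) (V*(s) − V(s)) = (1 − γ)^{-1} ∑_{s}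 ν*(s) ∑_{a} A^π(s,a) (π*(a|s) − π(a|s)). (Lemma 5, Performance Difference Using Advantage.) -/
/-- Lemma 5 (Performance Difference Using Advantage): with `ν*` the discounted state
visitation distribution of `π*` from initial distribution `μ` (characterized by the
flow equation), `∑_s μ(s)(V*(s) − V(s)) = (1−γ)⁻¹ ∑_s ν*(s) ∑_a A^π(s,a)(π*(a|s) − π(a|s))`. -/
theorem performance_difference_advantage
    {S 𝒜 : Type*} [Fintype S] [Fintype 𝒜] [Nonempty S] [Nonempty 𝒜]
    (P : S → 𝒜 → S → ℝ) (r : S → 𝒜 → ℝ) (γ : ℝ)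
    (hγ0 : 0 < γ) (hγ1 : γ < 1)
    (hPnn : ∀ s a s', 0 ≤ P s a s') (hPsum : ∀ s a, ∑ s', P s a s' = 1)
    (πstar π : S → 𝒜 → ℝ)
    (hπstarnn : ∀ s a, 0 ≤ πstar s a) (hπstarsum : ∀ s, ∑ a, πstar s a = 1)
    (hπnn : ∀ s a, 0 ≤ π s a) (hπsum : ∀ s, ∑ a, π s a = 1)
    (Vstar V : S → ℝ)
    (hVstar : ∀ s, Vstar s = ∑ a, πstar s a * (r s a + γ * ∑ s', P s a s' * Vstar s'))
    (hV : ∀ s, V s = ∑ a, π s a * (r s a + γ * ∑ s', P s a s' * V s'))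
    (Aπ : S → 𝒜 → ℝ)
    (hAπ : ∀ s a, Aπ s a = r s a + γ * ∑ s', P s a s' * V s' - V s)
    (μ : S → ℝ) (hμnn : ∀ s, 0 ≤ μ s) (hμsum : ∑ s, μ s = 1)
    (νstar : S → ℝ)
    (hflow : ∀ s', νstar s' =
      (1 - γ) * μ s' + γ * ∑ s, ∑ a, νstar s * πstar s a * P s a s') :
    ∑ s, μ s * (Vstar s - V s) =
      (1 - γ)⁻¹ * ∑ s, νstar s * ∑ a, Aπ s a * (πstar s a - π s a) := by
  have hγne : (1 : ℝ) - γ ≠ 0 := by linarith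
  set D : S → ℝ := fun s => Vstar s - V s with hD
  -- ∑_a π(a|s) A(s,a) = 0
  have h1 : ∀ s, ∑ a, π s a * Aπ s a = 0 := by
    intro s
    have : ∑ a, π s a * Aπ s a
        = ∑ a, π s a * (r s a + γ * ∑ s', P s a s' * V s') - ∑ a, π s a * V s := by
      simp only [hAπ, mul_sub, Finset.sum_sub_distrib]
    rw [this, ← Finset.sum_mul, hπsum, one_mul, ← hV s, sub_self]
  -- ∑_a π*(a|s) A(s,a) = D s - γ ∑_a π* ∑_{s'} P D
  have h2 : ∀ s, ∑ a, πstar s a * Aπ s a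
      = D s - γ * ∑ a, πstar s a * ∑ s', P s a s' * D s' := by
    intro s
    have step : ∀ a, πstar s a * Aπ s a
        = πstar s a * (r s a + γ * ∑ s', P s a s' * Vstar s')
          - γ * (πstar s a * ∑ s', P s a s' * D s') - πstar s a * V s := by
      intro a
      have hsub : ∑ s', P s a s' * D s'
          = ∑ s', P s a s' * Vstar s' - ∑ s', P s a s' * V s' := by
        simp [hD, mul_sub, Finset.sum_sub_distrib]
      rw [hAπ, hsub]; ring
    calc ∑ a, πstar s a * Aπ s a
        = ∑ a, πstar s a * (r s a + γ * ∑ s', P s a s' * Vstar s')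
          - γ * ∑ a, πstar s a * ∑ s', P s a s' * D s'
          - ∑ a, πstar s a * V s := by
          simp only [step, Finset.sum_sub_distrib, Finset.mul_sum]
      _ = D s - γ * ∑ a, πstar s a * ∑ s', P s a s' * D s' := by
          rw [← hVstar s, ← Finset.sum_mul, hπstarsum, one_mul]
          simp only [hD]; ring
  -- combine: ∑_a A (π* - π) = D s - γ ∑ ...
  have h3 : ∀ s, ∑ a, Aπ s a * (πstar s a - π s a)
      = D s - γ * ∑ a, πstar s a * ∑ s', P s a s' * D s' := by
    intro s
    have : ∑ a, Aπ s a * (πstar s a - π s a)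
        = ∑ a, πstar s a * Aπ s a - ∑ a, π s a * Aπ s a := by
      simp only [mul_sub, Finset.sum_sub_distrib]
      congr 1 <;> exact Finset.sum_congr rfl fun a _ => by ring
    rw [this, h1 s, sub_zero, h2 s]
  -- sum swap for the second-order term
  have swap : ∑ s, νstar s * (γ * ∑ a, πstar s a * ∑ s', P s a s' * D s')
      = ∑ s', (γ * ∑ s, ∑ a, νstar s * πstar s a * P s a s') * D s' := by
    have l : ∑ s, νstar s * (γ * ∑ a, πstar s a * ∑ s', P s a s' * D s')
        = ∑ s, ∑ a, ∑ s', γ * (νstar s * πstar s a * P s a s') * D s' := by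
      simp only [Finset.mul_sum]
      exact Finset.sum_congr rfl fun s _ => Finset.sum_congr rfl fun a _ =>
        Finset.sum_congr rfl fun s' _ => by ring
    have rr : ∑ s', (γ * ∑ s, ∑ a, νstar s * πstar s a * P s a s') * D s'
        = ∑ s', ∑ s, ∑ a, γ * (νstar s * πstar s a * P s a s') * D s' := by
      simp only [Finset.sum_mul, Finset.mul_sum]
    rw [l, rr]
    have m : ∑ s, ∑ a, ∑ s', γ * (νstar s * πstar s a * P s a s') * D s'
        = ∑ s, ∑ s', ∑ a, γ * (νstar s * πstar s a * P s a s') * D s' :=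
      Finset.sum_congr rfl fun s _ => Finset.sum_comm
    rw [m]
    exact Finset.sum_comm

  have hflow' : ∀ s', γ * ∑ s, ∑ a, νstar s * πstar s a * P s a s'
      = νstar s' - (1 - γ) * μ s' := by
    intro s'
    have := hflow s'
    linarith
  have main : ∑ s, νstar s * ∑ a, Aπ s a * (πstar s a - π s a)
      = (1 - γ) * ∑ s, μ s * D s := by
    calc ∑ s, νstar s * ∑ a, Aπ s a * (πstar s a - π s a)
        = ∑ s, (νstar s * D s - νstar s * (γ * ∑ a, πstar s a * ∑ s', P s a s' * D s')) := by
          refine Finset.sum_congr rfl fun s _ => ?_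
          rw [h3 s]; ring
      _ = ∑ s, νstar s * D s - ∑ s', (γ * ∑ s, ∑ a, νstar s * πstar s a * P s a s') * D s' := by
          rw [Finset.sum_sub_distrib, swap]
      _ = ∑ s, νstar s * D s - ∑ s', (νstar s' - (1 - γ) * μ s') * D s' := by
          rw [show (∑ s', (γ * ∑ s, ∑ a, νstar s * πstar s a * P s a s') * D s')
              = ∑ s', (νstar s' - (1 - γ) * μ s') * D s' from
            Finset.sum_congr rfl fun s' _ => by rw [hflow' s']]
      _ = (1 - γ) * ∑ s, μ s * D s := by
          have hx : ∑ s', (νstar s' - (1 - γ) * μ s') * D s'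
              = ∑ s', νstar s' * D s' - (1 - γ) * ∑ s', μ s' * D s' := by
            simp only [sub_mul, Finset.sum_sub_distrib, Finset.mul_sum, mul_assoc]
          rw [hx]; ring
  rw [main]
  field_simp
  rfl
end
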